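/- arXiv:1502.06989 — 2 statements merged into one kernel-verified Lean document; each statement's English description precedes it below -/
import Mathlib

section
/- Let k be a field of characteristic 0, G a finite group, and C = FI_G. Every finitely generated projective C-module is an injective object in the abelian category of C-modules. -/
open CategoryTheory CategoryTheory.Limits

attribute [local instance] CategoryTheory.Abelian.hasFiniteBiproducts

/-- Objects of the category `FI_G`: natural numbers (bundled). -/
structure FIG (G : Type) where
  n : ℕ

variable {G : Type}

/-- The category `FI_G`: a morphism `X ⟶ Y` is a pair `(f, c)` where
`f : Fin X.n ↪ Fin Y.n` is an injective map and `c : Fin X.n → G` is arbitrary,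
with composition `(f₂,c₂) ∘ (f₁,c₁) = (f₂ ∘ f₁, t ↦ c₂(f₁ t) * c₁ t)`. -/
instance FIG.category [Group G] : Category (FIG G) where
  Hom X Y := (Fin X.n ↪ Fin Y.n) × (Fin X.n → G)
  id X := ⟨Function.Embedding.refl _, fun _ => 1⟩
  comp f g := ⟨f.1.trans g.1, fun t => g.2 (f.1 t) * f.2 t⟩
  id_comp f := Prod.ext rfl (funext fun t => mul_one _)
  comp_id f := Prod.ext rfl (funext fun t => one_mul _)
  assoc f g h := by
    refine Prod.ext rfl ?_
    funext t
    dsimp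
    rw [mul_assoc]
    rfl

/-- The free `FI_G`-module `kC e_n`, sending `m` to the free `k`-module
on the hom-set `FI_G(n, m)`. -/
noncomputable def FIG.free (k : Type) [CommRing k] (G : Type) [Group G] (n : ℕ) :
    FIG G ⥤ ModuleCat k :=
  coyoneda.obj (Opposite.op ⟨n⟩) ⋙ ModuleCat.free k

/-- An `FI_G`-module is finitely generated if it admits an epimorphism from a
finite direct sum `⨁ᵢ kC e_{nᵢ}` of free modules. -/
noncomputable def FIG.FinGen (k : Type) [CommRing k] [Group G]
    (V : FIG G ⥤ ModuleCat k) : Prop :=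
  ∃ (r : ℕ) (a : Fin r → ℕ) (p : (⨁ fun i : Fin r => FIG.free k G (a i)) ⟶ V), Epi p

/-- An `FI_G`-module `V` is finite dimensional if each `V(m)` is a
finite-dimensional `k`-vector space and `V(m) = 0` for all but finitely many `m`. -/
def FIG.FinDim (k : Type) [Field k] [Group G] (V : FIG G ⥤ ModuleCat k) : Prop :=
  (∀ X : FIG G, Module.Finite k (V.obj X)) ∧
    ∃ N : ℕ, ∀ X : FIG G, N < X.n → IsZero (V.obj X)

/-- An `FI_G`-module `F` is torsion-free if `Hom(T, F) = 0` for every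
finite-dimensional `FI_G`-module `T`. -/
def FIG.TorsionFree (k : Type) [Field k] [Group G] (F : FIG G ⥤ ModuleCat k) : Prop :=
  ∀ T : FIG G ⥤ ModuleCat k, FIG.FinDim k T → ∀ f : T ⟶ F, f = 0

/-- Extension of an injection `f : Fin m ↪ Fin n` to `Fin (m+1) ↪ Fin (n+1)`,
sending `0 ↦ 0` and `t + 1 ↦ f t + 1`. -/
def FIG.extEmb {m n : ℕ} (f : Fin m ↪ Fin n) : Fin (m + 1) ↪ Fin (n + 1) where
  toFun := Fin.cons 0 (fun t => (f t).succ)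
  inj' := by
    intro a b h
    induction a using Fin.cases with
    | zero =>
      induction b using Fin.cases with
      | zero => rfl
      | succ j =>
        simp only [Fin.cons_zero, Fin.cons_succ] at h
        exact absurd h.symm (Fin.succ_ne_zero _)
    | succ i =>
      induction b using Fin.cases with
      | zero =>
        simp only [Fin.cons_zero, Fin.cons_succ] at h
        exact absurd h (Fin.succ_ne_zero _)
      | succ j =>
        simp only [Fin.cons_succ] at h
        exact congrArg Fin.succ (f.injective (Fin.succ_injective _ h))

/-- The functor `ι : FI_G → FI_G`, `ι(n) = 1 ⊙ n`: on objects `n ↦ n + 1`, and on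
a morphism `(f, c)` it gives `(f', c')` with `f' 0 = 0`, `c' 0 = 1`,
`f' (t+1) = f t + 1` and `c' (t+1) = c t`. -/
def FIG.iota (G : Type) [Group G] : FIG G ⥤ FIG G where
  obj X := ⟨X.n + 1⟩
  map f := ⟨FIG.extEmb f.1, Fin.cons 1 f.2⟩
  map_id X := by
    refine Prod.ext (DFunLike.ext _ _ fun t => ?_) (funext fun t => ?_) <;>
      induction t using Fin.cases <;> rfl
  map_comp {X Y Z} f g := by
    refine Prod.ext (DFunLike.ext _ _ fun t => ?_) (funext fun t => ?_) <;>
      induction t using Fin.cases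
    · rfl
    · rfl
    · exact (one_mul 1).symm
    · rfl

/-- The shift functor `S : V ↦ V ∘ ι` on `FI_G`-modules. -/
def FIG.S (k : Type) [CommRing k] (G : Type) [Group G] :
    (FIG G ⥤ ModuleCat k) ⥤ (FIG G ⥤ ModuleCat k) :=
  (Functor.whiskeringLeft (FIG G) (FIG G) (ModuleCat k)).obj (FIG.iota G)

/-!
A homomorphism `B ⟶ kC e_n` is determined by its coefficients at the standard inclusions
`⟨n⟩ ⟶ ⟨N⟩`. These kill the span `J_N` (`nonCovering`) of the images of maps missing one of the
first `n` points and the span `R_N` (`augmentation`) of the `σ v - v`, `σ` in the stabiliser of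
those points, so they form a functional on `Φ(B) = colim_N B(N) / (J_N + R_N)`; conversely every
functional on `Φ(B)` arises this way. Hence `kC e_n` is injective as soon as `Φ` takes monomorphisms
to injections. In characteristic `0`, averaging over the finite stabiliser disposes of `R_N`; and
the alternating sum `∑_Q (-1)^|Q| (move the points of Q out of the way)` vanishes on `J_N` but
agrees with the standard inclusion `N → N + n` modulo `J_{N+n}`, so membership in `J` can be pulled
back along a monomorphism after a shift by `n`. Finally, a finitely generated projective module is a
retract of a finite sum of the `kC e_n`.
-/

lemma Finset.sum_neg_one_pow_smul_inter_eq_zero {ι M : Type*} [Fintype ι] [DecidableEq ι]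
    [AddCommGroup M] {S : Finset ι} (hS : S ≠ Finset.univ) (g : Finset ι → M) :
    ∑ Q : Finset ι, (-1 : ℤ) ^ Q.card • g (Q ∩ S) = 0 := by
  obtain ⟨a, haS⟩ : ∃ a, a ∉ S := by simpa [Finset.eq_univ_iff_forall] using hS
  have hins : ∀ Q ∈ (Finset.univ.erase a).powerset, (-1 : ℤ) ^ Q.card • g (Q ∩ S) +
      (-1 : ℤ) ^ (insert a Q).card • g (insert a Q ∩ S) = 0 := fun Q hQ => by
    have haQ : a ∉ Q := fun h => by simpa using Finset.mem_powerset.mp hQ h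
    rw [Finset.card_insert_of_notMem haQ, Finset.insert_inter_of_notMem haS, pow_succ,
      mul_neg_one, neg_smul, add_neg_cancel]
  rw [← Finset.powerset_univ, ← Finset.insert_erase (Finset.mem_univ a),
    Finset.sum_powerset_insert (Finset.notMem_erase a _), ← Finset.sum_add_distrib]
  exact Finset.sum_eq_zero hins

namespace FIG

variable [Group G] {k : Type} [Field k]

lemma hom_ext {X Y : FIG G} {f g : X ⟶ Y} (h₁ : ∀ t, f.1 t = g.1 t) (h₂ : ∀ t, f.2 t = g.2 t) :
    f = g :=
  Prod.ext (DFunLike.ext _ _ h₁) (funext h₂)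

@[simp] lemma comp_fst {X Y Z : FIG G} (f : X ⟶ Y) (g : Y ⟶ Z) (t : Fin X.n) :
    (f ≫ g).1 t = g.1 (f.1 t) := rfl

@[simp] lemma comp_snd {X Y Z : FIG G} (f : X ⟶ Y) (g : Y ⟶ Z) (t : Fin X.n) :
    (f ≫ g).2 t = g.2 (f.1 t) * f.2 t := rfl

lemma le_of_hom {X Y : FIG G} (f : X ⟶ Y) : X.n ≤ Y.n := by
  simpa using Fintype.card_le_of_embedding f.1

instance [Finite G] (X Y : FIG G) : Finite (X ⟶ Y) :=
  inferInstanceAs (Finite ((Fin X.n ↪ Fin Y.n) × (Fin X.n → G)))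

lemma comp_left_injective {W X Y : FIG G} (g : X ⟶ Y) :
    Function.Injective fun f : W ⟶ X => f ≫ g := by
  intro f₁ f₂ h
  have h₁ : ∀ t, f₁.1 t = f₂.1 t := fun t => g.1.injective (congrArg (fun f => f.1 t) h)
  refine hom_ext h₁ fun t => mul_left_cancel (a := g.2 (f₁.1 t)) ?_
  simpa only [comp_snd, h₁ t] using congrArg (fun f => f.2 t) h

instance isIso_of_endo {X : FIG G} (σ : X ⟶ X) : IsIso σ := by
  let e := Equiv.ofBijective σ.1 (Finite.injective_iff_bijective.mp σ.1.injective)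
  refine ⟨⟨e.symm.toEmbedding, fun y => (σ.2 (e.symm y))⁻¹⟩, hom_ext (fun t => ?_) (fun t => ?_),
    hom_ext (fun y => ?_) (fun y => ?_)⟩
  · exact e.symm_apply_apply t
  · show (σ.2 (e.symm (e t)))⁻¹ * σ.2 t = 1
    rw [e.symm_apply_apply, inv_mul_cancel]
  · exact e.apply_symm_apply y
  · exact mul_inv_cancel _

def incl {m N : ℕ} (h : m ≤ N) : (⟨m⟩ : FIG G) ⟶ ⟨N⟩ :=
  ⟨Fin.castLEEmb h, fun _ => 1⟩

@[simp] lemma incl_snd {m N : ℕ} (h : m ≤ N) (t : Fin m) : (incl (G := G) h).2 t = 1 := rfl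

@[simp] lemma incl_comp_incl {m N P : ℕ} (h₁ : m ≤ N) (h₂ : N ≤ P) :
    incl (G := G) h₁ ≫ incl h₂ = incl (h₁.trans h₂) :=
  hom_ext (fun _ => rfl) (fun _ => one_mul 1)

@[simp] lemma incl_refl (N : ℕ) : incl (G := G) (le_refl N) = 𝟙 _ :=
  hom_ext (fun _ => rfl) (fun _ => rfl)

def CoversBelow (n : ℕ) {X Y : FIG G} (f : X ⟶ Y) : Prop :=
  ∀ q : Fin n, ∃ t, (f.1 t : ℕ) = q

def FixesBelow (n : ℕ) {Y : FIG G} (σ : Y ⟶ Y) : Prop :=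
  ∀ t : Fin Y.n, (t : ℕ) < n → σ.1 t = t ∧ σ.2 t = 1

lemma FixesBelow.comp {n : ℕ} {Y : FIG G} {σ τ : Y ⟶ Y} (hσ : FixesBelow n σ)
    (hτ : FixesBelow n τ) : FixesBelow n (σ ≫ τ) := fun t ht => by
  simp [(hσ t ht).1, (hσ t ht).2, (hτ t ht).1, (hτ t ht).2]

lemma incl_comp_eq_iff {n N : ℕ} (hn : n ≤ N) {σ : (⟨N⟩ : FIG G) ⟶ ⟨N⟩} :
    incl hn ≫ σ = incl hn ↔ FixesBelow n σ := by
  refine ⟨fun h t ht => ?_, fun h => hom_ext (fun t => (h _ t.isLt).1) (fun t => ?_)⟩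
  · have h₁ := congrArg (fun f => f.1 ⟨t, ht⟩) h
    have h₂ := congrArg (fun f => f.2 ⟨t, ht⟩) h
    simp only [comp_snd, incl_snd, mul_one] at h₁ h₂
    exact ⟨h₁, h₂⟩
  · simpa using (h _ t.isLt).2

lemma not_coversBelow_of_lt {n : ℕ} {X Y : FIG G} (f : X ⟶ Y) (h : Y.n < n) :
    ¬ CoversBelow n f := fun hf => by
  obtain ⟨t, ht⟩ := hf ⟨Y.n, h⟩
  exact (f.1 t).isLt.ne ht

lemma CoversBelow.of_comp {n N : ℕ} {X : FIG G} (hn : n ≤ N) (f : X ⟶ ⟨N⟩)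
    {σ : (⟨N⟩ : FIG G) ⟶ ⟨N⟩} (hσ : FixesBelow n σ) (hc : CoversBelow n (f ≫ σ)) :
    CoversBelow n f := fun q => by
  obtain ⟨t, ht⟩ := hc q
  have hq := (hσ ⟨q, q.isLt.trans_le hn⟩ q.isLt).1
  refine ⟨t, congrArg Fin.val (σ.1.injective ((Fin.ext ht).trans hq.symm))⟩

lemma CoversBelow.exists_comp_eq_incl {n : ℕ} {X Y : FIG G} {f : X ⟶ Y} (hn : n ≤ Y.n)
    (h : CoversBelow n f) : ∃ ρ : (⟨n⟩ : FIG G) ⟶ X, ρ ≫ f = incl hn := by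
  choose t ht using h
  have ht_inj : Function.Injective t := fun q₁ q₂ hq => Fin.ext <| by
    rw [← ht q₁, ← ht q₂, hq]
  exact ⟨⟨⟨t, ht_inj⟩, fun q => (f.2 (t q))⁻¹⟩,
    hom_ext (fun q => Fin.ext (ht q)) (fun q => mul_inv_cancel (f.2 (t q)))⟩

lemma exists_comp_eq {m N : ℕ} (f g : (⟨m⟩ : FIG G) ⟶ ⟨N⟩) :
    ∃ σ : (⟨N⟩ : FIG G) ⟶ ⟨N⟩, f ≫ σ = g := by
  obtain ⟨π, hπ⟩ := Equiv.Perm.exists_extending_pair f.1 g.1 f.1.injective g.1.injective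
  refine ⟨⟨π.toEmbedding, Function.extend f.1 (fun t => g.2 t * (f.2 t)⁻¹) 1⟩,
    hom_ext hπ fun t => ?_⟩
  simp [f.1.injective.extend_apply]

lemma exists_incl_comp_eq {n N M : ℕ} (hn : n ≤ N) (hNM : N ≤ M) (g : (⟨N⟩ : FIG G) ⟶ ⟨M⟩)
    (hg : incl hn ≫ g = incl (hn.trans hNM)) :
    ∃ τ : (⟨M⟩ : FIG G) ⟶ ⟨M⟩, incl hNM ≫ τ = g ∧ FixesBelow n τ := by
  obtain ⟨τ, hτ⟩ := exists_comp_eq (incl hNM) g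
  refine ⟨τ, hτ, (incl_comp_eq_iff (hn.trans hNM)).mp ?_⟩
  rw [← incl_comp_incl hn hNM, Category.assoc, hτ, hg, incl_comp_incl]

section Submodules

variable (V : FIG G ⥤ ModuleCat k) (n : ℕ)

def nonCovering (N : ℕ) : Submodule k (V.obj ⟨N⟩) :=
  Submodule.span k
    {y | ∃ (X : FIG G) (α : X ⟶ ⟨N⟩) (c : V.obj X), ¬ CoversBelow n α ∧ V.map α c = y}

abbrev Stab (G : Type) [Group G] (n N : ℕ) : Type :=
  {σ : (⟨N⟩ : FIG G) ⟶ ⟨N⟩ // FixesBelow n σ}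

def augmentation (N : ℕ) : Submodule k (V.obj ⟨N⟩) :=
  Submodule.span k {y | ∃ (σ : Stab G n N) (v : V.obj ⟨N⟩), V.map σ.1 v - v = y}

def phiKer (N : ℕ) : Submodule k (V.obj ⟨N⟩) :=
  nonCovering V n N ⊔ augmentation V n N

variable {V n}

lemma map_map {X Y Z : FIG G} (f : X ⟶ Y) (g : Y ⟶ Z) (x : V.obj X) :
    V.map g (V.map f x) = V.map (f ≫ g) x := by
  simp

lemma map_mem_nonCovering {N : ℕ} {X : FIG G} {α : X ⟶ ⟨N⟩} (hα : ¬ CoversBelow n α)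
    (c : V.obj X) : V.map α c ∈ nonCovering V n N :=
  Submodule.subset_span ⟨X, α, c, hα, rfl⟩

lemma map_sub_mem_augmentation {N : ℕ} (σ : Stab G n N) (v : V.obj ⟨N⟩) :
    V.map σ.1 v - v ∈ augmentation V n N :=
  Submodule.subset_span ⟨σ, v, rfl⟩

lemma nonCovering_eq_top {N : ℕ} (hN : N < n) : nonCovering V n N = ⊤ :=
  eq_top_iff.mpr fun x _ => by
    simpa using map_mem_nonCovering (not_coversBelow_of_lt (𝟙 (⟨N⟩ : FIG G)) hN) x

lemma map_mem_nonCovering_of_mem {N M : ℕ} {β : (⟨N⟩ : FIG G) ⟶ ⟨M⟩}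
    (hβ : ∀ {X : FIG G} (α : X ⟶ ⟨N⟩), CoversBelow n (α ≫ β) → CoversBelow n α)
    {x : V.obj ⟨N⟩} (hx : x ∈ nonCovering V n N) : V.map β x ∈ nonCovering V n M := by
  refine (Submodule.map_span_le _ _ _).mpr ?_ (Submodule.mem_map_of_mem hx)
  rintro _ ⟨X, α, c, hα, rfl⟩
  simpa using map_mem_nonCovering (fun h => hα (hβ α h)) c

lemma map_incl_mem_phiKer {N M : ℕ} (h : N ≤ M) {x : V.obj ⟨N⟩} (hx : x ∈ phiKer V n N) :
    V.map (incl h) x ∈ phiKer V n M := by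
  have hJ : ∀ y ∈ nonCovering V n N, V.map (incl h) y ∈ nonCovering V n M :=
    fun y => map_mem_nonCovering_of_mem (V := V) fun _ hc q => hc q
  by_cases hn : n ≤ N
  swap
  · refine Submodule.mem_sup_left (hJ x ?_)
    simp [nonCovering_eq_top (not_le.mp hn)]
  obtain ⟨xJ, hxJ, xR, hxR, rfl⟩ := Submodule.mem_sup.mp hx
  rw [map_add]
  refine add_mem (Submodule.mem_sup_left (hJ xJ hxJ)) (Submodule.mem_sup_right ?_)
  refine (Submodule.map_span_le _ _ _).mpr ?_ (Submodule.mem_map_of_mem hxR)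
  rintro _ ⟨σ, v, rfl⟩
  obtain ⟨τ, hτ, hτfix⟩ := exists_incl_comp_eq hn h (σ.1 ≫ incl h) <| by
    rw [← Category.assoc, (incl_comp_eq_iff hn).mpr σ.2, incl_comp_incl]
  rw [map_sub, map_map, ← hτ, ← map_map]
  exact map_sub_mem_augmentation ⟨τ, hτfix⟩ (V.map (incl h) v)

end Submodules

section Naturality

variable {A B : FIG G ⥤ ModuleCat k} (u : A ⟶ B) {n N : ℕ}

lemma app_mem_nonCovering {x : A.obj ⟨N⟩} (hx : x ∈ nonCovering A n N) :
    u.app _ x ∈ nonCovering B n N := by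
  refine (Submodule.map_span_le _ _ _).mpr ?_ (Submodule.mem_map_of_mem hx)
  rintro _ ⟨X, α, c, hα, rfl⟩
  simpa using map_mem_nonCovering hα (u.app X c)

lemma app_mem_augmentation {x : A.obj ⟨N⟩} (hx : x ∈ augmentation A n N) :
    u.app _ x ∈ augmentation B n N := by
  refine (Submodule.map_span_le _ _ _).mpr ?_ (Submodule.mem_map_of_mem hx)
  rintro _ ⟨σ, v, rfl⟩
  simpa using map_sub_mem_augmentation σ (u.app _ v)

lemma app_mem_phiKer {x : A.obj ⟨N⟩} (hx : x ∈ phiKer A n N) : u.app _ x ∈ phiKer B n N := by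
  obtain ⟨xJ, hxJ, xR, hxR, rfl⟩ := Submodule.mem_sup.mp hx
  rw [map_add]
  exact add_mem (Submodule.mem_sup_left (app_mem_nonCovering u hxJ))
    (Submodule.mem_sup_right (app_mem_augmentation u hxR))

end Naturality

section Average

variable [Finite G] (V : FIG G ⥤ ModuleCat k) (n N : ℕ)

noncomputable instance : Fintype (Stab G n N) := Fintype.ofFinite _

instance : Nonempty (Stab G n N) := ⟨⟨𝟙 _, fun _ _ => ⟨rfl, rfl⟩⟩⟩

noncomputable def average : V.obj ⟨N⟩ →ₗ[k] V.obj ⟨N⟩ :=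
  (Fintype.card (Stab G n N) : k)⁻¹ • ∑ σ : Stab G n N, (V.map σ.1).hom

variable {V n N}

lemma average_apply (x : V.obj ⟨N⟩) :
    average V n N x = (Fintype.card (Stab G n N) : k)⁻¹ • ∑ σ : Stab G n N, V.map σ.1 x := by
  simp [average]

lemma average_map (τ : Stab G n N) (x : V.obj ⟨N⟩) :
    average V n N (V.map τ.1 x) = average V n N x := by
  have hbij : Function.Bijective fun σ : Stab G n N => (⟨τ.1 ≫ σ.1, τ.2.comp σ.2⟩ : Stab G n N) :=
    Finite.injective_iff_bijective.mp fun σ₁ σ₂ h =>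
      Subtype.ext ((cancel_epi τ.1).mp (congrArg Subtype.val h))
  simp only [average_apply, map_map]
  congr 1
  exact Fintype.sum_bijective _ hbij _ _ fun _ => rfl

lemma average_eq_zero_of_mem {x : V.obj ⟨N⟩} (hx : x ∈ augmentation V n N) :
    average V n N x = 0 := by
  refine (Submodule.span_le (p := LinearMap.ker (average V n N))).mpr ?_ hx
  rintro _ ⟨σ, v, rfl⟩
  simp [average_map]

lemma average_sub_self_mem [CharZero k] (x : V.obj ⟨N⟩) :
    average V n N x - x ∈ augmentation V n N := by
  have hcard : (Fintype.card (Stab G n N) : k) ≠ 0 := Nat.cast_ne_zero.mpr Fintype.card_ne_zero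
  have : average V n N x - x =
      (Fintype.card (Stab G n N) : k)⁻¹ • ∑ σ : Stab G n N, (V.map σ.1 x - x) := by
    rw [Finset.sum_sub_distrib, smul_sub, average_apply, Finset.sum_const, Finset.card_univ,
      ← Nat.cast_smul_eq_nsmul k, smul_smul, inv_mul_cancel₀ hcard, one_smul]
  rw [this]
  exact Submodule.smul_mem _ _ (Submodule.sum_mem _ fun σ _ => map_sub_mem_augmentation σ x)

lemma average_mem_nonCovering (hn : n ≤ N) {x : V.obj ⟨N⟩} (hx : x ∈ nonCovering V n N) :
    average V n N x ∈ nonCovering V n N := by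
  rw [average_apply]
  exact Submodule.smul_mem _ _ <| Submodule.sum_mem _ fun σ _ =>
    map_mem_nonCovering_of_mem (fun α hc => hc.of_comp hn α σ.2) hx

lemma average_mem_nonCovering_of_mem_phiKer (hn : n ≤ N) {x : V.obj ⟨N⟩}
    (hx : x ∈ phiKer V n N) : average V n N x ∈ nonCovering V n N := by
  obtain ⟨xJ, hxJ, xR, hxR, rfl⟩ := Submodule.mem_sup.mp hx
  rw [map_add, average_eq_zero_of_mem hxR, add_zero]
  exact average_mem_nonCovering hn hxJ

lemma app_average {A B : FIG G ⥤ ModuleCat k} (u : A ⟶ B) (x : A.obj ⟨N⟩) :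
    u.app _ (average A n N x) = average B n N (u.app _ x) := by
  simp [average_apply, map_sum]

end Average

section Avoid

variable {n M : ℕ}

def avoidEmb (Q : Finset (Fin n)) : Fin M ↪ Fin (M + n) where
  toFun j := if h : ∃ q ∈ Q, (q : ℕ) = j then ⟨M + j, by obtain ⟨q, -, hq⟩ := h; omega⟩
    else Fin.castAdd n j
  inj' j₁ j₂ h := by
    dsimp only at h
    split_ifs at h <;> simp only [Fin.ext_iff, Fin.val_castAdd] at h <;> ext <;> omega

lemma avoidEmb_val (Q : Finset (Fin n)) (j : Fin M) :
    (avoidEmb Q j : ℕ) = if ∃ q ∈ Q, (q : ℕ) = j then M + j else j := by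
  change ((if h : ∃ q ∈ Q, (q : ℕ) = j then _ else _ : Fin (M + n)) : ℕ) = _
  split_ifs <;> rfl

def avoid (Q : Finset (Fin n)) : (⟨M⟩ : FIG G) ⟶ ⟨M + n⟩ :=
  ⟨avoidEmb Q, 1⟩

@[simp] lemma avoid_empty : avoid (G := G) (M := M) (∅ : Finset (Fin n)) = incl (by omega) :=
  hom_ext (fun j => Fin.ext ((avoidEmb_val _ j).trans (if_neg (by simp)))) (fun _ => rfl)

lemma not_coversBelow_avoid (hn : n ≤ M) {Q : Finset (Fin n)} (hQ : Q.Nonempty) :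
    ¬ CoversBelow n (avoid (G := G) (M := M) Q) := fun hc => by
  obtain ⟨q, hq⟩ := hQ
  obtain ⟨j, hj⟩ := hc q
  change (avoidEmb (M := M) Q j : ℕ) = q at hj
  rw [avoidEmb_val] at hj
  split_ifs at hj with h
  · omega
  · exact h ⟨q, hq, hj.symm⟩

def hitBelow (n : ℕ) {X Y : FIG G} (α : X ⟶ Y) : Finset (Fin n) :=
  {q | ∃ t, (α.1 t : ℕ) = q}

lemma hitBelow_ne_univ {X Y : FIG G} {α : X ⟶ Y} (hα : ¬ CoversBelow n α) :
    hitBelow n α ≠ Finset.univ := fun h => hα fun q => by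
  have hq : q ∈ hitBelow n α := h ▸ Finset.mem_univ q
  simpa [hitBelow] using hq

lemma comp_avoid_eq_inter {X : FIG G} (α : X ⟶ ⟨M⟩) (Q : Finset (Fin n)) :
    α ≫ avoid Q = α ≫ avoid (Q ∩ hitBelow n α) := by
  refine hom_ext (fun t => Fin.ext ?_) (fun _ => rfl)
  change (avoidEmb (M := M) Q (α.1 t) : ℕ) = avoidEmb (Q ∩ hitBelow n α) (α.1 t)
  simp only [avoidEmb_val, Finset.mem_inter, hitBelow, Finset.mem_filter, Finset.mem_univ,
    true_and]
  congr 1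
  exact propext ⟨fun ⟨q, hq, e⟩ => ⟨q, ⟨hq, t, e.symm⟩, e⟩, fun ⟨q, ⟨hq, _⟩, e⟩ => ⟨q, hq, e⟩⟩

end Avoid

section AlternatingSum

variable (V : FIG G ⥤ ModuleCat k) (n M : ℕ)

noncomputable def altSum : V.obj ⟨M⟩ →ₗ[k] V.obj ⟨M + n⟩ :=
  ∑ Q : Finset (Fin n), (-1 : ℤ) ^ Q.card • (V.map (avoid Q)).hom

variable {V n M}

lemma altSum_apply (x : V.obj ⟨M⟩) :
    altSum V n M x = ∑ Q : Finset (Fin n), (-1 : ℤ) ^ Q.card • V.map (avoid Q) x := by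
  simp [altSum]

lemma altSum_eq_zero_of_mem {x : V.obj ⟨M⟩} (hx : x ∈ nonCovering V n M) :
    altSum V n M x = 0 := by
  refine (Submodule.span_le (p := LinearMap.ker (altSum V n M))).mpr ?_ hx
  rintro _ ⟨X, α, c, hα, rfl⟩
  simp only [SetLike.mem_coe, LinearMap.mem_ker, altSum_apply, map_map]
  refine (Finset.sum_congr rfl fun Q _ => ?_).trans
    (Finset.sum_neg_one_pow_smul_inter_eq_zero (hitBelow_ne_univ hα) fun Q => V.map (α ≫ avoid Q) c)
  rw [comp_avoid_eq_inter α Q]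

lemma app_altSum {A B : FIG G ⥤ ModuleCat k} (u : A ⟶ B) (x : A.obj ⟨M⟩) :
    u.app _ (altSum A n M x) = altSum B n M (u.app _ x) := by
  simp [altSum_apply, map_sum]

/-- Only the `Q = ∅` term of the alternating sum covers the first `n` points. -/
lemma map_incl_sub_altSum_mem (hn : n ≤ M) (x : V.obj ⟨M⟩) :
    V.map (incl (Nat.le_add_right M n)) x - altSum V n M x ∈ nonCovering V n (M + n) := by
  rw [altSum_apply, ← Finset.add_sum_erase _ _ (Finset.mem_univ ∅)]
  simp only [Finset.card_empty, pow_zero, one_smul, avoid_empty, sub_add_cancel_left]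
  refine neg_mem (Submodule.sum_mem _ fun Q hQ => Submodule.smul_of_tower_mem _ _ ?_)
  exact map_mem_nonCovering
    (not_coversBelow_avoid hn (Finset.nonempty_iff_ne_empty.mpr (Finset.ne_of_mem_erase hQ))) x

lemma map_incl_mem_nonCovering {A B : FIG G ⥤ ModuleCat k} (u : A ⟶ B) (hn : n ≤ M)
    (hu : Function.Injective (u.app ⟨M + n⟩)) {x : A.obj ⟨M⟩}
    (hx : u.app _ x ∈ nonCovering B n M) :
    A.map (incl (Nat.le_add_right M n)) x ∈ nonCovering A n (M + n) := by
  have hsum : altSum A n M x = 0 :=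
    hu (by rw [app_altSum, altSum_eq_zero_of_mem hx, map_zero])
  simpa [hsum] using map_incl_sub_altSum_mem hn x

end AlternatingSum

section Phi

variable (V : FIG G ⥤ ModuleCat k) (n : ℕ)

abbrev PhiStage (N : ℕ) : Type := V.obj ⟨N⟩ ⧸ phiKer V n N

noncomputable def phiTransition (N M : ℕ) (h : N ≤ M) : PhiStage V n N →ₗ[k] PhiStage V n M :=
  Submodule.mapQ _ _ (V.map (incl h)).hom fun _ hx => map_incl_mem_phiKer h hx

lemma phiTransition_mk {N M : ℕ} (h : N ≤ M) (x : V.obj ⟨N⟩) :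
    phiTransition V n N M h (Submodule.Quotient.mk x) = Submodule.Quotient.mk (V.map (incl h) x) :=
  rfl

instance : DirectedSystem (PhiStage V n) (phiTransition V n · · ·) where
  map_self N x := by
    obtain ⟨x, rfl⟩ := Submodule.Quotient.mk_surjective _ x
    simp [phiTransition_mk]
  map_map {N M P} hNM hMP x := by
    obtain ⟨x, rfl⟩ := Submodule.Quotient.mk_surjective _ x
    simp [phiTransition_mk, map_map]

abbrev Phi : Type := Module.DirectLimit (PhiStage V n) (phiTransition V n)

noncomputable def toPhi (N : ℕ) : V.obj ⟨N⟩ →ₗ[k] Phi V n :=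
  Module.DirectLimit.of k ℕ (PhiStage V n) (phiTransition V n) N ∘ₗ (phiKer V n N).mkQ

variable {V n}

lemma toPhi_apply {N : ℕ} (x : V.obj ⟨N⟩) :
    toPhi V n N x =
      Module.DirectLimit.of k ℕ (PhiStage V n) (phiTransition V n) N (Submodule.Quotient.mk x) :=
  rfl

@[simp] lemma toPhi_map_incl {N M : ℕ} (h : N ≤ M) (x : V.obj ⟨N⟩) :
    toPhi V n M (V.map (incl h) x) = toPhi V n N x := by
  rw [toPhi_apply, toPhi_apply, ← Module.DirectLimit.of_f (hij := h), phiTransition_mk]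

lemma toPhi_eq_zero {N : ℕ} {x : V.obj ⟨N⟩} (hx : x ∈ phiKer V n N) : toPhi V n N x = 0 := by
  rw [toPhi_apply, (Submodule.Quotient.mk_eq_zero _).mpr hx, map_zero]

lemma toPhi_map_eq_zero {N : ℕ} {X : FIG G} {α : X ⟶ ⟨N⟩} (hα : ¬ CoversBelow n α)
    (c : V.obj X) : toPhi V n N (V.map α c) = 0 :=
  toPhi_eq_zero (Submodule.mem_sup_left (map_mem_nonCovering hα c))

lemma toPhi_map_of_incl_comp {N M : ℕ} (hn : n ≤ N) (hNM : N ≤ M) {g : (⟨N⟩ : FIG G) ⟶ ⟨M⟩}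
    (hg : incl hn ≫ g = incl (hn.trans hNM)) (x : V.obj ⟨N⟩) :
    toPhi V n M (V.map g x) = toPhi V n N x := by
  obtain ⟨τ, rfl, hτ⟩ := exists_incl_comp_eq hn hNM g hg
  rw [← map_map, ← toPhi_map_incl hNM x, ← sub_eq_zero, ← map_sub]
  exact toPhi_eq_zero (Submodule.mem_sup_right (map_sub_mem_augmentation ⟨τ, hτ⟩ _))

lemma exists_toPhi_eq (z : Phi V n) : ∃ N x, toPhi V n N x = z := by
  obtain ⟨N, x, rfl⟩ := Module.DirectLimit.exists_of z
  obtain ⟨x, rfl⟩ := Submodule.Quotient.mk_surjective _ x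
  exact ⟨N, x, rfl⟩

lemma exists_map_incl_mem_of_toPhi_eq_zero {N : ℕ} {x : V.obj ⟨N⟩} (hx : toPhi V n N x = 0) :
    ∃ (M : ℕ) (h : N ≤ M), V.map (incl h) x ∈ phiKer V n M := by
  obtain ⟨M, h, hM⟩ := Module.DirectLimit.of.zero_exact hx
  exact ⟨M, h, (Submodule.Quotient.mk_eq_zero _).mp hM⟩

lemma toPhi_average [Finite G] [CharZero k] {N : ℕ} (x : V.obj ⟨N⟩) :
    toPhi V n N (average V n N x) = toPhi V n N x := by
  rw [← sub_eq_zero, ← map_sub]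
  exact toPhi_eq_zero (Submodule.mem_sup_right (average_sub_self_mem x))

end Phi

section PhiMap

variable {A B : FIG G ⥤ ModuleCat k} (u : A ⟶ B) (n : ℕ)

noncomputable def phiMap : Phi A n →ₗ[k] Phi B n :=
  Module.DirectLimit.map
    (fun N => Submodule.mapQ _ _ (u.app ⟨N⟩).hom fun _ hx => app_mem_phiKer u hx)
    fun N M h => Submodule.linearMap_qext _ <| LinearMap.ext fun x => by
      simp [phiTransition_mk]

lemma phiMap_toPhi {N : ℕ} (x : A.obj ⟨N⟩) :
    phiMap u n (toPhi A n N x) = toPhi B n N (u.app _ x) := by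
  simp [phiMap, toPhi_apply]

variable {u n} [Finite G] [CharZero k]

lemma toPhi_eq_zero_of_app_mem (hu : ∀ N, Function.Injective (u.app ⟨N⟩)) {N : ℕ}
    {x : A.obj ⟨N⟩} (hx : u.app _ x ∈ phiKer B n N) : toPhi A n N x = 0 := by
  rcases lt_or_ge N n with hN | hn
  · exact toPhi_eq_zero (Submodule.mem_sup_left (by simp [nonCovering_eq_top hN]))
  have hJ : u.app _ (average A n N x) ∈ nonCovering B n N := by
    rw [app_average]
    exact average_mem_nonCovering_of_mem_phiKer hn hx
  rw [← toPhi_average, ← toPhi_map_incl (Nat.le_add_right N n)]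
  exact toPhi_eq_zero (Submodule.mem_sup_left (map_incl_mem_nonCovering u hn (hu _) hJ))

theorem phiMap_injective (hu : ∀ N, Function.Injective (u.app ⟨N⟩)) :
    Function.Injective (phiMap u n) := by
  refine (injective_iff_map_eq_zero _).mpr fun z hz => ?_
  obtain ⟨N, x, rfl⟩ := exists_toPhi_eq z
  rw [phiMap_toPhi] at hz
  obtain ⟨M, h, hM⟩ := exists_map_incl_mem_of_toPhi_eq_zero hz
  rw [← toPhi_map_incl h]
  exact toPhi_eq_zero_of_app_mem hu (by rwa [← NatTrans.naturality_apply] at hM)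

end PhiMap

section FreeModule

variable {n : ℕ}

def coeff {X : FIG G} (ψ : (⟨n⟩ : FIG G) ⟶ X) : (FIG.free k G n).obj X →ₗ[k] k :=
  Finsupp.lapply ψ

lemma free_ext {X : FIG G} {v w : (FIG.free k G n).obj X} (h : ∀ ψ, coeff ψ v = coeff ψ w) :
    v = w :=
  Finsupp.ext h

lemma coeff_map_comp {X Y : FIG G} (ψ : (⟨n⟩ : FIG G) ⟶ X) (g : X ⟶ Y)
    (v : (FIG.free k G n).obj X) : coeff (ψ ≫ g) ((FIG.free k G n).map g v) = coeff ψ v :=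
  Finsupp.mapDomain_apply (comp_left_injective g) v ψ

lemma coeff_map_eq_zero {X Y : FIG G} (g : X ⟶ Y) {ψ' : (⟨n⟩ : FIG G) ⟶ Y}
    (h : ∀ ψ, ψ ≫ g ≠ ψ') (v : (FIG.free k G n).obj X) :
    coeff ψ' ((FIG.free k G n).map g v) = 0 :=
  Finsupp.mapDomain_of_notMem_range _ _ fun ⟨ψ, hψ⟩ => h ψ hψ

end FreeModule

section Straighten

variable {n : ℕ}

noncomputable def straighten {Y : FIG G} (ψ : (⟨n⟩ : FIG G) ⟶ Y) : Y ⟶ ⟨Y.n⟩ :=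
  (exists_comp_eq ψ (incl (le_of_hom ψ))).choose

lemma comp_straighten {Y : FIG G} (ψ : (⟨n⟩ : FIG G) ⟶ Y) :
    ψ ≫ straighten ψ = incl (le_of_hom ψ) :=
  (exists_comp_eq ψ (incl (le_of_hom ψ))).choose_spec

variable (V : FIG G ⥤ ModuleCat k)

noncomputable def phiAt {Y : FIG G} (ψ : (⟨n⟩ : FIG G) ⟶ Y) : V.obj Y →ₗ[k] Phi V n :=
  toPhi V n Y.n ∘ₗ (V.map (straighten ψ)).hom

variable {V}

lemma phiAt_apply {Y : FIG G} (ψ : (⟨n⟩ : FIG G) ⟶ Y) (v : V.obj Y) :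
    phiAt V ψ v = toPhi V n Y.n (V.map (straighten ψ) v) :=
  rfl

lemma phiAt_map_comp {Y Z : FIG G} (ψ : (⟨n⟩ : FIG G) ⟶ Y) (g : Y ⟶ Z) (v : V.obj Y) :
    phiAt V (ψ ≫ g) (V.map g v) = phiAt V ψ v := by
  -- `h` fixes the standard copy of the first `n` points, hence acts trivially on `Φ`
  set h : (⟨Y.n⟩ : FIG G) ⟶ ⟨Z.n⟩ := inv (straighten ψ) ≫ g ≫ straighten (ψ ≫ g)
  have hh : incl (le_of_hom ψ) ≫ h = incl ((le_of_hom ψ).trans (le_of_hom g)) := by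
    rw [← comp_straighten ψ, Category.assoc, IsIso.hom_inv_id_assoc, ← Category.assoc,
      comp_straighten]
  rw [phiAt_apply, phiAt_apply, map_map, ← IsIso.hom_inv_id_assoc (straighten ψ)
    (g ≫ straighten (ψ ≫ g)), ← map_map]
  exact toPhi_map_of_incl_comp (le_of_hom ψ) (le_of_hom g) hh _

lemma phiAt_map_eq_zero {Y Z : FIG G} (g : Y ⟶ Z) {ψ' : (⟨n⟩ : FIG G) ⟶ Z}
    (h : ∀ ψ, ψ ≫ g ≠ ψ') (v : V.obj Y) : phiAt V ψ' (V.map g v) = 0 := by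
  rw [phiAt_apply, map_map]
  refine toPhi_map_eq_zero (fun hc => ?_) v
  obtain ⟨ρ, hρ⟩ := hc.exists_comp_eq_incl (le_of_hom ψ')
  refine h ρ ((cancel_mono (straighten ψ')).mp ?_)
  rw [Category.assoc, hρ, comp_straighten]

lemma phiAt_app {A B : FIG G ⥤ ModuleCat k} (u : A ⟶ B) {Y : FIG G}
    (ψ : (⟨n⟩ : FIG G) ⟶ Y) (a : A.obj Y) :
    phiAt B ψ (u.app Y a) = phiMap u n (phiAt A ψ a) := by
  rw [phiAt_apply, phiAt_apply, phiMap_toPhi, NatTrans.naturality_apply]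

end Straighten

section Coefficient

variable {n : ℕ} {A : FIG G ⥤ ModuleCat k} (η : A ⟶ FIG.free k G n)

noncomputable def coeffStage (N : ℕ) : A.obj ⟨N⟩ →ₗ[k] k :=
  if h : n ≤ N then coeff (incl h) ∘ₗ (η.app _).hom else 0

lemma coeffStage_apply {N : ℕ} (h : n ≤ N) (x : A.obj ⟨N⟩) :
    coeffStage η N x = coeff (incl h) (η.app _ x) := by
  simp [coeffStage, h]

lemma coeffStage_eq_zero_of_mem {N : ℕ} {x : A.obj ⟨N⟩} (hx : x ∈ phiKer A n N) :
    coeffStage η N x = 0 := by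
  by_cases h : n ≤ N
  swap
  · simp [coeffStage, h]
  refine (sup_le (Submodule.span_le.mpr ?_) (Submodule.span_le.mpr ?_) :
    phiKer A n N ≤ LinearMap.ker (coeffStage η N)) hx
  · rintro _ ⟨X, α, c, hα, rfl⟩
    simp only [SetLike.mem_coe, LinearMap.mem_ker, coeffStage_apply η h,
      NatTrans.naturality_apply]
    refine coeff_map_eq_zero α (fun ψ hψ => hα fun q => ⟨ψ.1 q, ?_⟩) _
    exact congrArg (fun f => (f.1 q : ℕ)) hψ
  · rintro _ ⟨σ, v, rfl⟩
    simp only [SetLike.mem_coe, LinearMap.mem_ker, map_sub, coeffStage_apply η h,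
      NatTrans.naturality_apply, sub_eq_zero]
    conv_lhs => rw [← (incl_comp_eq_iff h).mpr σ.2]
    exact coeff_map_comp _ _ _

lemma coeffStage_map_incl {N M : ℕ} (hNM : N ≤ M) (x : A.obj ⟨N⟩) :
    coeffStage η M (A.map (incl hNM) x) = coeffStage η N x := by
  by_cases hN : n ≤ N
  · rw [coeffStage_apply η (hN.trans hNM), coeffStage_apply η hN, NatTrans.naturality_apply,
      ← incl_comp_incl hN hNM, coeff_map_comp]
  by_cases hM : n ≤ M
  · rw [coeffStage_apply η hM, NatTrans.naturality_apply, coeff_map_eq_zero _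
      (fun ψ _ => hN (le_of_hom ψ))]
    simp [coeffStage, hN]
  · simp [coeffStage, hN, hM]

noncomputable def coeffPhi : Phi A n →ₗ[k] k :=
  Module.DirectLimit.lift k ℕ (PhiStage A n) (phiTransition A n)
    (fun N => (phiKer A n N).liftQ (coeffStage η N) fun _ => coeffStage_eq_zero_of_mem η)
    fun N M h x => by
      obtain ⟨x, rfl⟩ := Submodule.Quotient.mk_surjective _ x
      exact coeffStage_map_incl η h x

lemma coeffPhi_toPhi {N : ℕ} (x : A.obj ⟨N⟩) :
    coeffPhi η (toPhi A n N x) = coeffStage η N x := by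
  rw [coeffPhi, toPhi_apply, Module.DirectLimit.lift_of]
  rfl

lemma coeffPhi_phiAt {Y : FIG G} (ψ : (⟨n⟩ : FIG G) ⟶ Y) (a : A.obj Y) :
    coeffPhi η (phiAt A ψ a) = coeff ψ (η.app Y a) := by
  rw [phiAt_apply, coeffPhi_toPhi, coeffStage_apply η (le_of_hom ψ), NatTrans.naturality_apply,
    ← comp_straighten ψ, coeff_map_comp]

end Coefficient

section Extend

variable {n : ℕ} [Finite G] {B : FIG G ⥤ ModuleCat k} (μ : Phi B n →ₗ[k] k)

noncomputable def extendApp (Y : FIG G) : B.obj Y →ₗ[k] (FIG.free k G n).obj Y :=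
  (Finsupp.linearEquivFunOnFinite k k ((⟨n⟩ : FIG G) ⟶ Y)).symm.toLinearMap ∘ₗ
    LinearMap.pi fun ψ => μ ∘ₗ phiAt B ψ

lemma coeff_extendApp {Y : FIG G} (ψ : (⟨n⟩ : FIG G) ⟶ Y) (b : B.obj Y) :
    coeff ψ (extendApp μ Y b) = μ (phiAt B ψ b) :=
  rfl

noncomputable def extend : B ⟶ FIG.free k G n where
  app Y := ModuleCat.ofHom (extendApp μ Y)
  naturality Y Z g := by
    ext v : 2
    refine free_ext fun ψ' => ?_
    change coeff ψ' (extendApp μ Z (B.map g v)) =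
      coeff ψ' ((FIG.free k G n).map g (extendApp μ Y v))
    by_cases h : ∃ ψ, ψ ≫ g = ψ'
    · obtain ⟨ψ, rfl⟩ := h
      rw [coeff_extendApp, coeff_map_comp, coeff_extendApp, phiAt_map_comp]
    · push Not at h
      rw [coeff_extendApp, coeff_map_eq_zero g h, phiAt_map_eq_zero g h, map_zero]

lemma comp_extend {A : FIG G ⥤ ModuleCat k} (u : A ⟶ B) (η : A ⟶ FIG.free k G n)
    (h : μ ∘ₗ phiMap u n = coeffPhi η) : u ≫ extend μ = η := by
  refine NatTrans.ext (funext fun Y => ModuleCat.hom_ext (LinearMap.ext fun a =>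
    free_ext (k := k) fun ψ => ?_))
  change coeff ψ (extendApp μ Y (u.app Y a)) = _
  rw [coeff_extendApp, phiAt_app, ← LinearMap.comp_apply, h, coeffPhi_phiAt]

end Extend

theorem free_injective [Finite G] [CharZero k] (n : ℕ) : Injective (FIG.free k G n) where
  factors {A B} η u _ := by
    have hu : ∀ N, Function.Injective (u.app ⟨N⟩) := fun N =>
      (ModuleCat.mono_iff_injective _).mp inferInstance
    obtain ⟨r, hr⟩ := LinearMap.exists_leftInverse_of_injective (phiMap u n)
      (LinearMap.ker_eq_bot.mpr (phiMap_injective hu))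
    exact ⟨extend (coeffPhi η ∘ₗ r), comp_extend _ u η (by rw [LinearMap.comp_assoc, hr]; rfl)⟩

end FIG

/-- **Theorem.** Let `k` be a field of characteristic 0, `G` a finite group and
`C = FI_G`. Every finitely generated projective `C`-module is an injective object
of the abelian category of `C`-modules. -/
theorem FIG.projective_injective (k : Type) [Field k] [CharZero k]
    (G : Type) [Group G] [Finite G]
    (V : FIG G ⥤ ModuleCat k) (hfg : FIG.FinGen k V) (hproj : Projective V) :
    Injective V := by
  obtain ⟨r, a, p, hp⟩ := hfg
  have (i : Fin r) : Injective (FIG.free k G (a i)) := FIG.free_injective (a i)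
  exact Retract.injective ⟨Projective.factorThru (𝟙 V) p, p, Projective.factorThru_comp _ _⟩
end

section
/- Let k be a commutative ring and let C be an EI category with object set ℕ satisfying the standing conditions, and assume C is locally Noetherian over k. Let V and W be finitely generated C-modules. Then there exists N ∈ ℕ such that for all n ≥ N, there is an isomorphism of k-modules Ext^1_C(V, W) ≅ Ext^1_{C_n}(j*(V), j*(W)), where j : C_n → C is the inclusion of the full subcategory on {0,1,…,n} and j* is precomposition with j. -/
/-!
Because `C` is locally Noetherian, `V` has a projective resolution `P•` whose terms are finite
sums of free modules `kC e_a`: cover `V`, then each successive kernel, which stays finitely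
generated. Restriction `j*` is exact and sends `kC e_a` to the free `C_n`-module on `a` if `a ≤ n`
and to `0` if `a > n` (as `C(a, m) = ∅` for `m < a`), so `j* P•` resolves `j* V`. By Yoneda,
`j*` is bijective on `Hom(kC e_a, W)` for `a ≤ n`; once `n` bounds the generator degrees of
`P₀, P₁, P₂`, the complexes `Hom(P•, W)` and `Hom(j* P•, j* W)` agree in degrees `0, 1, 2`,
hence have the same first cohomology.
-/

open CategoryTheory CategoryTheory.Limits

attribute [local instance] CategoryTheory.Abelian.hasFiniteBiproducts

section EI

variable [Category.{0} ℕ]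

/-- The standing conditions on the category `C` (whose set of objects is `ℕ`):
every endomorphism is an isomorphism (`C` is an EI category); `C(m,n) = ∅` when
`m > n`; `C(m,n)` is a nonempty finite set when `m ≤ n`; and for `m ≤ l ≤ n` the
composition map `C(l,n) × C(m,l) → C(m,n)` is surjective. -/
def EIStanding : Prop :=
  (∀ (n : ℕ) (f : n ⟶ n), IsIso f) ∧
  (∀ ⦃m n : ℕ⦄, n < m → IsEmpty (m ⟶ n)) ∧
  (∀ ⦃m n : ℕ⦄, m ≤ n → Nonempty (m ⟶ n)) ∧
  (∀ m n : ℕ, Finite (m ⟶ n)) ∧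
  (∀ ⦃m l n : ℕ⦄, m ≤ l → l ≤ n → ∀ h : m ⟶ n, ∃ (g : m ⟶ l) (f : l ⟶ n), g ≫ f = h)

/-- The free `C`-module `kC e_n`, sending `m` to the free `k`-module on the
hom-set `C(n, m)`. -/
noncomputable def EIfree (k : Type) [CommRing k] (n : ℕ) : ℕ ⥤ ModuleCat k :=
  coyoneda.obj (Opposite.op n) ⋙ ModuleCat.free k

/-- A `C`-module is finitely generated if it admits an epimorphism from a finite
direct sum `⨁ᵢ kC e_{nᵢ}` of free modules. -/
noncomputable def EIFinGen (k : Type) [CommRing k] (V : ℕ ⥤ ModuleCat k) : Prop :=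
  ∃ (r : ℕ) (a : Fin r → ℕ) (p : (⨁ fun i : Fin r => EIfree k (a i)) ⟶ V), Epi p

/-- `C` is locally Noetherian over `k`: every subfunctor of a finitely generated
`C`-module is finitely generated, i.e. the source of any monomorphism into a
finitely generated `C`-module is finitely generated. -/
noncomputable def EILocNoeth (k : Type) [CommRing k] : Prop :=
  ∀ (V W : ℕ ⥤ ModuleCat k) (f : W ⟶ V), Mono f → EIFinGen k V → EIFinGen k W

/-- The full subcategory `C_n` of `C` on the objects `{0, 1, …, n}`. -/
abbrev EIsub (n : ℕ) := ObjectProperty.FullSubcategory (fun m : ℕ => m ≤ n)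

/-- A `C`-module (resp. `C_n`-module) is finite dimensional over a field `k` if
all its values are finite dimensional and all but finitely many vanish. -/
def EIFinDim (k : Type) [Field k] (V : ℕ ⥤ ModuleCat k) : Prop :=
  (∀ m : ℕ, Module.Finite k (V.obj m)) ∧ ∃ N : ℕ, ∀ m : ℕ, N < m → IsZero (V.obj m)

/-- `C` satisfies the transitivity condition: for each `n`, the group `C(n+1,n+1)`
acts transitively on `C(n,n+1)` by postcomposition. -/
def EITransitive : Prop :=
  ∀ (n : ℕ) (f g : (n : ℕ) ⟶ (n + 1 : ℕ)), ∃ h : (n + 1 : ℕ) ⟶ (n + 1 : ℕ), f ≫ h = g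

/-- `0` is an initial object of `C`: `C(0,n)` is a singleton for every `n`. -/
def EIInitialZero : Prop :=
  ∀ n : ℕ, Nonempty ((0 : ℕ) ⟶ n) ∧ Subsingleton ((0 : ℕ) ⟶ n)

end EI

open Opposite

universe u v

namespace CategoryTheory

section FreeCoyoneda

variable (k : Type u) [Ring k] {𝒞 : Type*} [Category.{u} 𝒞]

noncomputable abbrev freeCoyoneda (c : 𝒞) : 𝒞 ⥤ ModuleCat k :=
  coyoneda.obj (op c) ⋙ ModuleCat.free k

variable {k}

noncomputable def freeCoyonedaEquiv (c : 𝒞) (W : 𝒞 ⥤ ModuleCat k) :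
    (freeCoyoneda k c ⟶ W) ≃ W.obj c where
  toFun φ := φ.app c (ModuleCat.freeMk (𝟙 c))
  invFun w :=
    { app := fun m => ModuleCat.freeDesc (TypeCat.ofHom fun f : c ⟶ m => W.map f w)
      naturality := fun m m' g => by
        apply ModuleCat.free_hom_ext
        intro f
        simp [ModuleCat.free_map_apply] }
  left_inv φ := by
    ext m : 2
    apply ModuleCat.free_hom_ext
    intro f
    have h := ConcreteCategory.congr_hom (φ.naturality f) (ModuleCat.freeMk (𝟙 c))
    simp only [comp_apply, Functor.comp_map] at h
    simpa [ModuleCat.free_map_apply] using h.symm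
  right_inv w := by simp

lemma freeCoyonedaEquiv_comp {c : 𝒞} {W W' : 𝒞 ⥤ ModuleCat k} (φ : freeCoyoneda k c ⟶ W)
    (e : W ⟶ W') : freeCoyonedaEquiv c W' (φ ≫ e) = e.app c (freeCoyonedaEquiv c W φ) :=
  rfl

instance (c : 𝒞) : Projective (freeCoyoneda k c) where
  factors {E X} f e _ := by
    obtain ⟨x, hx⟩ := (ModuleCat.epi_iff_surjective (e.app c)).1 inferInstance
      (freeCoyonedaEquiv c X f)
    refine ⟨(freeCoyonedaEquiv c E).symm x, (freeCoyonedaEquiv c X).injective ?_⟩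
    rw [freeCoyonedaEquiv_comp, Equiv.apply_symm_apply, hx]

variable {𝒟 : Type*} [Category.{u} 𝒟] {ι : 𝒟 ⥤ 𝒞}

noncomputable def Functor.FullyFaithful.freeCoyonedaIso (hι : ι.FullyFaithful) (d : 𝒟) :
    ι ⋙ freeCoyoneda k (ι.obj d) ≅ freeCoyoneda k d :=
  Functor.isoWhiskerRight
    (NatIso.ofComponents (F := ι ⋙ coyoneda.obj (op (ι.obj d))) (G := coyoneda.obj (op d))
      (fun x => hι.homEquiv.symm.toIso) fun g => by ext f; exact hι.map_injective (by simp))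
    (ModuleCat.free k)

lemma Functor.FullyFaithful.bijective_whiskeringLeft_map_freeCoyoneda (hι : ι.FullyFaithful)
    (d : 𝒟) (W : 𝒞 ⥤ ModuleCat k) :
    Function.Bijective
      (fun φ : freeCoyoneda k (ι.obj d) ⟶ W => ((Functor.whiskeringLeft _ _ _).obj ι).map φ) := by
  -- Both Hom-modules are `W.obj (ι.obj d)` by the Yoneda lemma, compatibly with restriction.
  have hyoneda : (freeCoyonedaEquiv d (ι ⋙ W) ∘ fun χ => (hι.freeCoyonedaIso d).inv ≫ χ) ∘
      (fun φ : freeCoyoneda k (ι.obj d) ⟶ W => Functor.whiskerLeft ι φ) =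
        freeCoyonedaEquiv _ W := by
    funext φ
    simp [freeCoyonedaEquiv, Functor.FullyFaithful.freeCoyonedaIso, ModuleCat.free_map_apply]
  have hcomp : Function.Bijective
      (freeCoyonedaEquiv d (ι ⋙ W) ∘ fun χ => (hι.freeCoyonedaIso (k := k) d).inv ≫ χ) :=
    (freeCoyonedaEquiv d (ι ⋙ W)).bijective.comp ⟨fun _ _ h => (cancel_epi _).1 h,
      fun χ => ⟨(hι.freeCoyonedaIso (k := k) d).hom ≫ χ, by simp⟩⟩
  exact (Function.Bijective.of_comp_iff' hcomp _).1 (hyoneda ▸ (freeCoyonedaEquiv _ W).bijective)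

end FreeCoyoneda

section MapBijective

variable {A B : Type*} [Category* A] [Category* B] (F : A ⥤ B)

lemma Functor.map_bijective_of_iso {P P' : A} (e : P ≅ P') (Y : A)
    (h : Function.Bijective (F.map : (P' ⟶ Y) → _)) : Function.Bijective (F.map : (P ⟶ Y) → _) := by
  have : (F.map : (P ⟶ Y) → _) = ((F.mapIso e).homCongr (Iso.refl _)).symm ∘ F.map ∘
      e.homCongr (Iso.refl Y) := by
    funext φ
    simp [Iso.homCongr]
  rw [this]
  exact (Equiv.bijective _).comp (h.comp (Equiv.bijective _))

lemma Functor.map_bijective_biproduct [Preadditive A] [Preadditive B] [F.Additive] {J : Type}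
    [Finite J] (f : J → A) [HasBiproduct f] (Y : A)
    (h : ∀ j, Function.Bijective (F.map : (f j ⟶ Y) → _)) :
    Function.Bijective (F.map : (⨁ f ⟶ Y) → _) := by
  refine ⟨fun φ ψ hφψ => biproduct.hom_ext' _ _ fun j => (h j).1 ?_, fun χ => ?_⟩
  · simp only [Functor.map_comp, hφψ]
  · choose φ hφ using fun j => (h j).2 (F.map (biproduct.ι f j) ≫ χ)
    refine ⟨biproduct.desc φ, ?_⟩
    rw [← cancel_epi (F.mapBiproduct f).inv, biproduct.mapBiproduct_inv_map_desc]
    ext j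
    simp only [hφ, biproduct.ι_desc]
    erw [biproduct.ι_desc_assoc]
    simp

end MapBijective

section Resolution

variable {A : Type*} [Category* A] [Abelian A]

lemma exact_epi_comp_kernel_ι {X Y Z G : A} (f : X ⟶ Y) (m : Y ⟶ Z) [Mono m] (e : G ⟶ kernel f)
    [Epi e] (g : X ⟶ Z) (hg : f ≫ m = g) :
    (ShortComplex.mk (e ≫ kernel.ι f) g (by simp [← hg])).Exact := by
  subst hg
  let α : ShortComplex.mk (e ≫ kernel.ι f) (f ≫ m) (by simp) ⟶
      ShortComplex.mk (kernel.ι f) (f ≫ m) (by simp) :=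
    { τ₁ := e, τ₂ := 𝟙 _, τ₃ := 𝟙 _ }
  have : Epi α.τ₁ := by dsimp [α]; infer_instance
  have : IsIso α.τ₂ := by dsimp [α]; infer_instance
  have : Mono α.τ₃ := by dsimp [α]; infer_instance
  rw [ShortComplex.exact_iff_of_epi_of_isIso_of_mono α]
  exact ShortComplex.exact_of_f_is_kernel _ (isKernelCompMono (kernelIsKernel f) m rfl)

namespace ProjectiveResolution

variable {S : ObjectProperty A} (P : S.FullSubcategory → A) (π : ∀ Y, P Y ⟶ Y.obj)
  (hK : ∀ Y, S (kernel (π Y)))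

noncomputable abbrev coverSyzygy (Y : S.FullSubcategory) (i : ℕ) : S.FullSubcategory :=
  Nat.rec Y (fun _ Z => ⟨kernel (π Z), hK Z⟩) i

noncomputable def coverComplex (Y : S.FullSubcategory) : ChainComplex A ℕ :=
  ChainComplex.of (fun i => P (coverSyzygy P π hK Y i))
    (fun i => π (coverSyzygy P π hK Y (i + 1)) ≫ kernel.ι (π (coverSyzygy P π hK Y i)))
    (fun i => by rw [Category.assoc, kernel.condition_assoc, zero_comp, comp_zero])

lemma coverComplex_d (Y : S.FullSubcategory) (i : ℕ) :
    (coverComplex P π hK Y).d (i + 1) i =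
      π (coverSyzygy P π hK Y (i + 1)) ≫ kernel.ι (π (coverSyzygy P π hK Y i)) := by
  simp only [coverComplex, ChainComplex.of_d]
  rfl

lemma coverComplex_exactAt_succ (Y : S.FullSubcategory) [∀ Y, Epi (π Y)] (i : ℕ) :
    (coverComplex P π hK Y).ExactAt (i + 1) := by
  rw [HomologicalComplex.exactAt_iff' _ (i + 2) (i + 1) i (by simp) (by simp)]
  dsimp only [HomologicalComplex.sc', HomologicalComplex.shortComplexFunctor']
  simp only [coverComplex_d]
  exact exact_epi_comp_kernel_ι (π (coverSyzygy P π hK Y (i + 1)))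
    (kernel.ι (π (coverSyzygy P π hK Y i))) (π (coverSyzygy P π hK Y (i + 2))) _ rfl

variable [∀ Y, Projective (P Y)] [∀ Y, Epi (π Y)]

/-- Stated for `(coverSyzygy P π hK Y 0).obj`, which is `Y.obj` by definition, so that the
augmentation `π (coverSyzygy P π hK Y 0)` needs no transport. -/
noncomputable def ofCovers (Y : S.FullSubcategory) :
    ProjectiveResolution (coverSyzygy P π hK Y 0).obj where
  complex := coverComplex P π hK Y
  projective _ := inferInstanceAs (Projective (P _))
  π := (ChainComplex.toSingle₀Equiv _ _).symm ⟨π (coverSyzygy P π hK Y 0), by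
    erw [coverComplex_d, Category.assoc, kernel.condition, comp_zero]⟩
  quasiIso := ⟨fun i => by
    cases i with
    | zero =>
      rw [ChainComplex.quasiIsoAt₀_iff, ShortComplex.quasiIso_iff_of_zeros']
      · refine (ShortComplex.exact_and_epi_g_iff_of_iso ?_).2
          ⟨exact_epi_comp_kernel_ι (π (coverSyzygy P π hK Y 0)) (𝟙 _) (π (coverSyzygy P π hK Y 1))
            _ (Category.comp_id _), by dsimp; infer_instance⟩
        refine ShortComplex.isoMk (Iso.refl _) (Iso.refl _) (Iso.refl _) ?_ ?_
        · erw [Category.id_comp]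
          exact (coverComplex_d P π hK Y 0).symm.trans (Category.comp_id _).symm
        · erw [Category.id_comp]
          dsimp
          exact (ChainComplex.toSingle₀Equiv_symm_apply_f_zero (C := coverComplex P π hK Y) (π Y)
            _).symm.trans (Category.comp_id _).symm
      all_goals rfl
    | succ i =>
      rw [quasiIsoAt_iff_exactAt']
      · exact coverComplex_exactAt_succ P π hK Y i
      · exact ChainComplex.exactAt_succ_single_obj _ _⟩

end ProjectiveResolution

theorem exists_projectiveResolution_of_covers (S Q : ObjectProperty A)
    (cover : ∀ X, S X → ∃ (P : A) (π : P ⟶ X), Projective P ∧ Q P ∧ Epi π ∧ S (kernel π))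
    {X : A} (hX : S X) : ∃ R : ProjectiveResolution X, ∀ i, Q (R.complex.X i) := by
  choose P π hP hQ hπ hK using fun Y : S.FullSubcategory => cover Y.obj Y.property
  exact ⟨ProjectiveResolution.ofCovers P π hK ⟨X, hX⟩, fun i => hQ _⟩

end Resolution

section ExtComparison

variable {k : Type*} [Ring k] {A B : Type*} [Category.{v} A] [Category.{v} B] [Abelian A]
  [Abelian B] [CategoryTheory.Linear k A] [CategoryTheory.Linear k B] (F : A ⥤ B) [F.Additive] [F.Linear k]

lemma CochainComplex.quasiIsoAt_succ_of_epi_of_isIso_of_mono {C : Type*} [Category* C] [Abelian C]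
    {K L : CochainComplex C ℕ} (φ : K ⟶ L) (m : ℕ) (h₀ : Epi (φ.f m)) (h₁ : IsIso (φ.f (m + 1)))
    (h₂ : Mono (φ.f (m + 2))) : QuasiIsoAt φ (m + 1) := by
  rw [quasiIsoAt_iff' _ m (m + 1) (m + 2) (by simp) (by simp)]
  have : Epi ((HomologicalComplex.shortComplexFunctor' C _ m (m + 1) (m + 2)).map φ).τ₁ := h₀
  have : IsIso ((HomologicalComplex.shortComplexFunctor' C _ m (m + 1) (m + 2)).map φ).τ₂ := h₁
  have : Mono ((HomologicalComplex.shortComplexFunctor' C _ m (m + 1) (m + 2)).map φ).τ₃ := h₂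
  exact ShortComplex.quasiIso_of_epi_of_isIso_of_mono _

noncomputable def Functor.mapLinearYonedaObj (K : ChainComplex A ℕ) (Y : A) :
    K.linearYonedaObj k Y ⟶
      ChainComplex.linearYonedaObj ((F.mapHomologicalComplex _).obj K) k (F.obj Y) where
  f _ := ModuleCat.ofHom (F.mapLinearMap k)
  comm' _ _ _ := by
    ext φ
    exact (F.map_comp _ _).symm

noncomputable def ProjectiveResolution.mapOfProjective [F.PreservesHomology] {X : A}
    (R : ProjectiveResolution X) (hF : ∀ i, Projective (F.obj (R.complex.X i))) :
    ProjectiveResolution (F.obj X) where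
  complex := (F.mapHomologicalComplex _).obj R.complex
  projective := hF
  π := (F.mapHomologicalComplex _).map R.π ≫
    (HomologicalComplex.singleMapHomologicalComplex _ _ _).hom.app _
  quasiIso := inferInstance

variable [EnoughProjectives A] [EnoughProjectives B] [F.PreservesHomology]

noncomputable def ProjectiveResolution.extSuccIsoOfMap {X : A} (R : ProjectiveResolution X)
    (hF : ∀ i, Projective (F.obj (R.complex.X i))) (Y : A) (m : ℕ)
    (h₀ : Function.Surjective (F.map : (R.complex.X m ⟶ Y) → _))
    (h₁ : Function.Bijective (F.map : (R.complex.X (m + 1) ⟶ Y) → _))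
    (h₂ : Function.Injective (F.map : (R.complex.X (m + 2) ⟶ Y) → _)) :
    ((Ext k A (m + 1)).obj (op X)).obj Y ≅ ((Ext k B (m + 1)).obj (op (F.obj X))).obj (F.obj Y) :=
  have := CochainComplex.quasiIsoAt_succ_of_epi_of_isIso_of_mono
    (F.mapLinearYonedaObj (k := k) R.complex Y) m ((ModuleCat.epi_iff_surjective _).2 h₀)
    ((ConcreteCategory.isIso_iff_bijective _).2 h₁) ((ModuleCat.mono_iff_injective _).2 h₂)
  R.isoExt (m + 1) Y ≪≫
    asIso (HomologicalComplex.homologyMap (F.mapLinearYonedaObj R.complex Y) (m + 1)) ≪≫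
    ((R.mapOfProjective F hF).isoExt (m + 1) (F.obj Y)).symm

end ExtComparison

end CategoryTheory

namespace EI

variable [Category.{0} ℕ] (k : Type) [CommRing k]

abbrev restrict (n : ℕ) : (ℕ ⥤ ModuleCat k) ⥤ (EIsub n ⥤ ModuleCat k) :=
  (Functor.whiskeringLeft (EIsub n) ℕ (ModuleCat k)).obj (ObjectProperty.ι _)

instance (n : ℕ) : (restrict k n).Linear k where

def IsFinFree (P : ℕ ⥤ ModuleCat k) : Prop :=
  ∃ (r : ℕ) (a : Fin r → ℕ), Nonempty (P ≅ ⨁ fun i => EIfree k (a i))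

instance (a : ℕ) : Projective (EIfree k a) :=
  inferInstanceAs (Projective (freeCoyoneda k a))

variable {k}

lemma restrict_map_bijective_EIfree {n a : ℕ} (h : a ≤ n) (W : ℕ ⥤ ModuleCat k) :
    Function.Bijective ((restrict k n).map : (EIfree k a ⟶ W) → _) :=
  (ObjectProperty.fullyFaithfulι _).bijective_whiskeringLeft_map_freeCoyoneda (⟨a, h⟩ : EIsub n) W

lemma IsFinFree.exists_restrict_map_bijective {P : ℕ ⥤ ModuleCat k} (hP : IsFinFree k P) :
    ∃ d, ∀ n, d ≤ n → ∀ W, Function.Bijective ((restrict k n).map : (P ⟶ W) → _) := by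
  obtain ⟨r, a, ⟨e⟩⟩ := hP
  refine ⟨Finset.univ.sup a, fun n hn W => (restrict k n).map_bijective_of_iso e W ?_⟩
  exact (restrict k n).map_bijective_biproduct _ W fun j =>
    restrict_map_bijective_EIfree ((Finset.le_sup (Finset.mem_univ j)).trans hn) W

lemma isZero_restrict_EIfree (hC : ∀ ⦃m n : ℕ⦄, n < m → IsEmpty (m ⟶ n)) {n a : ℕ} (h : n < a) :
    IsZero ((restrict k n).obj (EIfree k a)) := by
  rw [Functor.isZero_iff]
  intro x
  have : IsEmpty (a ⟶ x.obj) := hC (x.property.trans_lt h)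
  have : Subsingleton (((restrict k n).obj (EIfree k a)).obj x) :=
    inferInstanceAs (Subsingleton ((a ⟶ x.obj) →₀ k))
  exact ModuleCat.isZero_of_subsingleton _

lemma projective_restrict_EIfree (hC : ∀ ⦃m n : ℕ⦄, n < m → IsEmpty (m ⟶ n)) (n a : ℕ) :
    Projective ((restrict k n).obj (EIfree k a)) := by
  by_cases h : a ≤ n
  · exact Projective.of_iso
      ((ObjectProperty.fullyFaithfulι _).freeCoyonedaIso (⟨a, h⟩ : EIsub n)).symm inferInstance
  · exact (isZero_restrict_EIfree hC (not_le.1 h)).projective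

lemma IsFinFree.projective_restrict (hC : ∀ ⦃m n : ℕ⦄, n < m → IsEmpty (m ⟶ n))
    {P : ℕ ⥤ ModuleCat k} (hP : IsFinFree k P) (n : ℕ) : Projective ((restrict k n).obj P) := by
  obtain ⟨r, a, ⟨e⟩⟩ := hP
  have : ∀ j, Projective (((restrict k n).obj ∘ fun j => EIfree k (a j)) j) := fun j =>
    projective_restrict_EIfree hC n (a j)
  exact Projective.of_iso ((restrict k n).mapIso e ≪≫ (restrict k n).mapBiproduct _).symm
    inferInstance

lemma exists_isFinFree_cover (hN : EILocNoeth k) {V : ℕ ⥤ ModuleCat k} (hV : EIFinGen k V) :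
    ∃ (P : ℕ ⥤ ModuleCat k) (π : P ⟶ V),
      Projective P ∧ IsFinFree k P ∧ Epi π ∧ EIFinGen k (kernel π) := by
  obtain ⟨r, a, p, hp⟩ := hV
  exact ⟨_, p, inferInstance, ⟨r, a, ⟨Iso.refl _⟩⟩, hp,
    hN _ _ (kernel.ι p) inferInstance ⟨r, a, 𝟙 _, inferInstance⟩⟩

end EI

/-- **Lemma (reduction to `C_n`).** Let `k` be a commutative ring and `C` an EI
category with object set `ℕ` satisfying the standing conditions, locally Noetherian
over `k`. For finitely generated `C`-modules `V, W` there exists `N` such that for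
all `n ≥ N` there is an isomorphism of `k`-modules
`Ext¹_C(V, W) ≅ Ext¹_{C_n}(j*(V), j*(W))`. -/
theorem EI.ext_one_reduction [Category.{0} ℕ] (k : Type) [CommRing k]
    [EnoughProjectives (ℕ ⥤ ModuleCat k)]
    [∀ n : ℕ, EnoughProjectives (EIsub n ⥤ ModuleCat k)]
    (hC : EIStanding) (hN : EILocNoeth k)
    (V W : ℕ ⥤ ModuleCat k) (hV : EIFinGen k V) (hW : EIFinGen k W) :
    ∃ N : ℕ, ∀ n : ℕ, N ≤ n →
      Nonempty ((((Ext k (ℕ ⥤ ModuleCat k) 1).obj (Opposite.op V)).obj W) ≅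
        (((Ext k (EIsub n ⥤ ModuleCat k) 1).obj
            (Opposite.op (ObjectProperty.ι _ ⋙ V))).obj
          (ObjectProperty.ι _ ⋙ W))) := by
  obtain ⟨R, hR⟩ := exists_projectiveResolution_of_covers (EIFinGen k) (EI.IsFinFree k)
    (fun _ hX => EI.exists_isFinFree_cover hN hX) hV
  choose d hd using fun i => (hR i).exists_restrict_map_bijective
  refine ⟨d 0 ⊔ d 1 ⊔ d 2, fun n hn => ⟨?_⟩⟩
  exact R.extSuccIsoOfMap (EI.restrict k n) (fun i => (hR i).projective_restrict hC.2.1 n) W 0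
    (hd 0 n (by omega) W).2 (hd 1 n (by omega) W) (hd 2 n (by omega) W).1
end
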